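/- The set of strict Nash equilibria equals Z*: a profile z ∈ [0,1]^n is a strict Nash equilibrium if and only if there exists α with 0 < α ≤ α_* = 1/max_i(π_i σ_i²) such that z_i = 1 − α π_i σ_i² for every i. -/

import Mathlib

open Matrix Filter Topology Finset

namespace Stmt11
variable {n : ℕ}

lemma pow_nonneg' (Q : Matrix (Fin n) (Fin n) ℝ) (h : ∀ i j, 0 ≤ Q i j) :
    ∀ t, ∀ i j, 0 ≤ (Q ^ t) i j := by
  intro t
  induction t with
  | zero => intro i j; simp [Matrix.one_apply]; split <;> norm_num
  | succ t ih =>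
      intro i j
      rw [pow_succ, Matrix.mul_apply]
      exact Finset.sum_nonneg fun k _ => mul_nonneg (ih i k) (h k j)

lemma pow_rowsum (Q : Matrix (Fin n) (Fin n) ℝ) (h : ∀ i, ∑ j, Q i j = 1) :
    ∀ t, ∀ i, ∑ j, (Q ^ t) i j = 1 := by
  intro t
  induction t with
  | zero => intro i; simp [Matrix.one_apply]
  | succ t ih =>
      intro i
      simp only [pow_succ, Matrix.mul_apply]
      rw [Finset.sum_comm]
      calc ∑ k, ∑ j, (Q ^ t) i k * Q k j = ∑ k, (Q ^ t) i k * ∑ j, Q k j := by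
            simp [Finset.mul_sum]
        _ = 1 := by simp [h, ih i]

lemma pow_absorbing (Q : Matrix (Fin n) (Fin n) ℝ) (a : Fin n)
    (h : ∀ j, Q a j = if a = j then 1 else 0) :
    ∀ t j, (Q ^ t) a j = if a = j then 1 else 0 := by
  intro t
  induction t with
  | zero => intro j; simp [Matrix.one_apply]
  | succ t ih =>
      intro j
      rw [pow_succ', Matrix.mul_apply]
      rw [Finset.sum_eq_single a]
      · simp [h, ih]
      · intro k _ hk; rw [h k]; simp [Ne.symm hk]
      · simp

lemma tendsto_pow_div (m : ℕ) (hm : 1 ≤ m) (r : ℝ) (h0 : 0 ≤ r) (h1 : r < 1) :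
    Tendsto (fun t : ℕ => r ^ (t / m)) atTop (𝓝 0) := by
  have hdiv : Tendsto (fun t : ℕ => t / m) atTop atTop := by
    apply tendsto_atTop_atTop.2
    intro b
    exact ⟨b * m, fun t ht => (Nat.le_div_iff_mul_le hm).2 ht⟩
  exact (tendsto_pow_atTop_nhds_zero_of_lt_one h0 h1).comp hdiv

lemma geom_decay (a : ℕ → ℝ) (m : ℕ) (hm : 1 ≤ m) (β : ℝ) (hβ0 : 0 ≤ β) (hβ1 : β < 1)
    (h0 : ∀ t, 0 ≤ a t) (hanti : ∀ s t, s ≤ t → a t ≤ a s)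
    (hgeo : ∀ s, a (s * m) ≤ β ^ s) :
    Tendsto a atTop (𝓝 0) := by
  have key : ∀ t, a t ≤ β ^ (t / m) := by
    intro t
    calc a t ≤ a (t / m * m) := hanti _ _ (Nat.div_mul_le_self t m)
      _ ≤ β ^ (t / m) := hgeo _
  exact squeeze_zero h0 key (tendsto_pow_div m hm β hβ0 hβ1)

lemma conv_limit (hn : 2 ≤ n) (Q : Matrix (Fin n) (Fin n) ℝ)
    (hQ0 : ∀ i j, 0 ≤ Q i j) (hQ1 : ∀ i, ∑ j, Q i j = 1)
    (m : ℕ) (hm : 1 ≤ m) (δ : ℝ) (hδ : 0 < δ)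
    (hQm : ∀ i j, δ ≤ (Q ^ m) i j)
    (w : Fin n → ℝ) (hw0 : ∀ j, 0 ≤ w j) (hw1 : ∑ j, w j = 1)
    (hwQ : ∀ j, ∑ i, w i * Q i j = w j) :
    ∀ i j, Tendsto (fun t : ℕ => (Q ^ t) i j) atTop (𝓝 (w j)) := by
  have hnpos : 0 < n := by omega
  have ne : (univ : Finset (Fin n)).Nonempty := ⟨⟨0, hnpos⟩, mem_univ _⟩
  intro i₀ j
  set v : ℕ → Fin n → ℝ := fun t i => (Q ^ t) i j with hv
  set M : ℕ → ℝ := fun t => univ.sup' ne (v t) with hM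
  set mn : ℕ → ℝ := fun t => univ.inf' ne (v t) with hmn
  have hvle : ∀ t i, v t i ≤ M t := fun t i => le_sup' (v t) (mem_univ i)
  have hvge : ∀ t i, mn t ≤ v t i := fun t i => inf'_le (v t) (mem_univ i)
  have hosc0 : ∀ t, mn t ≤ M t := fun t => le_trans (hvge t i₀) (hvle t i₀)
  have rec1 : ∀ t i, v (t + 1) i = ∑ k, Q i k * v t k := by
    intro t i
    simp only [hv, pow_succ', Matrix.mul_apply]
  have recm : ∀ t i, v (m + t) i = ∑ k, (Q ^ m) i k * v t k := by
    intro t i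
    simp only [hv, pow_add, Matrix.mul_apply]
  -- averaging bounds
  have avg_le : ∀ t i, ∑ k, Q i k * v t k ≤ M t := by
    intro t i
    calc ∑ k, Q i k * v t k ≤ ∑ k, Q i k * M t :=
          Finset.sum_le_sum fun k _ => mul_le_mul_of_nonneg_left (hvle t k) (hQ0 i k)
      _ = M t := by rw [← Finset.sum_mul, hQ1 i, one_mul]
  have avg_ge : ∀ t i, mn t ≤ ∑ k, Q i k * v t k := by
    intro t i
    calc mn t = ∑ k, Q i k * mn t := by rw [← Finset.sum_mul, hQ1 i, one_mul]
      _ ≤ ∑ k, Q i k * v t k :=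
          Finset.sum_le_sum fun k _ => mul_le_mul_of_nonneg_left (hvge t k) (hQ0 i k)
  have Manti : ∀ s t, s ≤ t → M t ≤ M s := by
    have : ∀ t, M (t + 1) ≤ M t := by
      intro t
      apply sup'_le
      intro i _
      rw [rec1 t i]; exact avg_le t i
    exact fun s t hst => antitone_nat_of_succ_le this hst
  have mnmono : ∀ s t, s ≤ t → mn s ≤ mn t := by
    have : ∀ t, mn t ≤ mn (t + 1) := by
      intro t
      apply le_inf'
      intro i _
      rw [rec1 t i]; exact avg_ge t i
    exact fun s t hst => monotone_nat_of_le_succ this hst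
  set β : ℝ := 1 - 2 * δ with hβ
  have hsummin : ∀ i k, (n : ℝ) * δ ≤ ∑ p, min ((Q ^ m) i p) ((Q ^ m) k p) := by
    intro i k
    calc (n : ℝ) * δ = ∑ _p : Fin n, δ := by simp [mul_comm]
      _ ≤ ∑ p, min ((Q ^ m) i p) ((Q ^ m) k p) :=
          Finset.sum_le_sum fun p _ => le_min (hQm i p) (hQm k p)
  have hβ0 : 0 ≤ β := by
    have h1 := hsummin i₀ i₀
    have h2 : ∑ p, min ((Q ^ m) i₀ p) ((Q ^ m) i₀ p) ≤ 1 := by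
      simp only [min_self]
      rw [pow_rowsum Q hQ1 m i₀]
    have : (n : ℝ) ≥ 2 := by exact_mod_cast hn
    nlinarith
  have hβ1 : β < 1 := by simp only [hβ]; linarith
  -- contraction
  have contr : ∀ t, M (m + t) - mn (m + t) ≤ β * (M t - mn t) := by
    intro t
    obtain ⟨i1, _, hi1⟩ := exists_mem_eq_sup' ne (v (m + t))
    obtain ⟨k1, _, hk1⟩ := exists_mem_eq_inf' ne (v (m + t))
    have key : v (m + t) i1 - v (m + t) k1 ≤ β * (M t - mn t) := by
      have e1 : v (m + t) i1 - v (m + t) k1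
          = ∑ p, ((Q ^ m) i1 p - (Q ^ m) k1 p) * (v t p - mn t) := by
        rw [recm t i1, recm t k1]
        have : ∑ p, ((Q ^ m) i1 p - (Q ^ m) k1 p) * (v t p - mn t)
            = ∑ p, (Q ^ m) i1 p * v t p - ∑ p, (Q ^ m) k1 p * v t p
              - (∑ p, (Q ^ m) i1 p - ∑ p, (Q ^ m) k1 p) * mn t := by
          simp only [sub_mul, mul_sub, Finset.sum_sub_distrib, Finset.sum_mul]
        rw [this, pow_rowsum Q hQ1 m i1, pow_rowsum Q hQ1 m k1]
        ring
      rw [e1]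
      have step : ∀ p, ((Q ^ m) i1 p - (Q ^ m) k1 p) * (v t p - mn t)
          ≤ ((Q ^ m) i1 p - min ((Q ^ m) i1 p) ((Q ^ m) k1 p)) * (M t - mn t) := by
        intro p
        have h1 : 0 ≤ v t p - mn t := by linarith [hvge t p]
        have h2 : v t p - mn t ≤ M t - mn t := by linarith [hvle t p]
        rcases le_total ((Q ^ m) i1 p) ((Q ^ m) k1 p) with hc | hc
        · rw [min_eq_left hc]
          have : ((Q ^ m) i1 p - (Q ^ m) k1 p) * (v t p - mn t) ≤ 0 :=
            mul_nonpos_of_nonpos_of_nonneg (by linarith) h1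
          simpa using this
        · rw [min_eq_right hc]
          apply mul_le_mul (le_refl _) h2 h1 (by linarith)
      calc ∑ p, ((Q ^ m) i1 p - (Q ^ m) k1 p) * (v t p - mn t)
          ≤ ∑ p, ((Q ^ m) i1 p - min ((Q ^ m) i1 p) ((Q ^ m) k1 p)) * (M t - mn t) :=
            Finset.sum_le_sum fun p _ => step p
        _ = (1 - ∑ p, min ((Q ^ m) i1 p) ((Q ^ m) k1 p)) * (M t - mn t) := by
            rw [← Finset.sum_mul, Finset.sum_sub_distrib, pow_rowsum Q hQ1 m i1]
        _ ≤ β * (M t - mn t) := by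
            apply mul_le_mul_of_nonneg_right _ (by linarith [hosc0 t])
            have := hsummin i1 k1
            have : (n:ℝ) * δ ≥ 2 * δ := by
              have : (n : ℝ) ≥ 2 := by exact_mod_cast hn
              nlinarith
            linarith [hsummin i1 k1]
      
    calc M (m + t) - mn (m + t) = v (m + t) i1 - v (m + t) k1 := by
          simp only [hM, hmn]; rw [hi1, hk1]
      _ ≤ β * (M t - mn t) := key
  -- oscillation bounds
  have osc_anti : ∀ s t, s ≤ t → M t - mn t ≤ M s - mn s := by
    intro s t hst
    have := Manti s t hst
    have := mnmono s t hst
    linarith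
  have osc0le : M 0 - mn 0 ≤ 1 := by
    have h1 : M 0 ≤ 1 := by
      apply sup'_le
      intro i _
      simp only [hv, pow_zero, Matrix.one_apply]
      split <;> norm_num
    have h2 : 0 ≤ mn 0 := by
      apply le_inf'
      intro i _
      simp only [hv, pow_zero, Matrix.one_apply]
      split <;> norm_num
    linarith
  have osc_geo : ∀ s, M (s * m) - mn (s * m) ≤ β ^ s := by
    intro s
    induction s with
    | zero => simpa using osc0le
    | succ s ih =>
        have : (s + 1) * m = m + s * m := by ring
        rw [this, pow_succ]
        calc M (m + s * m) - mn (m + s * m) ≤ β * (M (s * m) - mn (s * m)) := contr _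
          _ ≤ β * β ^ s := mul_le_mul_of_nonneg_left ih hβ0
          _ = β ^ s * β := mul_comm _ _
  have osc_tendsto : Tendsto (fun t => M t - mn t) atTop (𝓝 0) :=
    geom_decay _ m hm β hβ0 hβ1 (fun t => by linarith [hosc0 t]) osc_anti osc_geo
  -- w stays between
  have winv : ∀ t, ∑ i, w i * v t i = w j := by
    intro t
    induction t with
    | zero =>
        simp only [hv, pow_zero, Matrix.one_apply]
        rw [Finset.sum_eq_single j] <;> simp_all
    | succ t ih =>
        have : ∀ i, v (t+1) i = ∑ k, Q i k * v t k := rec1 t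
        calc ∑ i, w i * v (t+1) i = ∑ i, w i * ∑ k, Q i k * v t k := by
              simp only [this]
          _ = ∑ i, ∑ k, w i * Q i k * v t k := by
              refine Finset.sum_congr rfl fun i _ => ?_
              rw [Finset.mul_sum]
              exact Finset.sum_congr rfl fun k _ => by ring
          _ = ∑ k, ∑ i, w i * Q i k * v t k := Finset.sum_comm
          _ = ∑ k, (∑ i, w i * Q i k) * v t k := by
              refine Finset.sum_congr rfl fun k _ => ?_
              rw [Finset.sum_mul]
          _ = ∑ k, w k * v t k := by simp only [hwQ]
          _ = w j := ih
  have wle : ∀ t, w j ≤ M t := by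
    intro t
    rw [← winv t]
    calc ∑ i, w i * v t i ≤ ∑ i, w i * M t :=
          Finset.sum_le_sum fun i _ => mul_le_mul_of_nonneg_left (hvle t i) (hw0 i)
      _ = M t := by rw [← Finset.sum_mul, hw1, one_mul]
  have wge : ∀ t, mn t ≤ w j := by
    intro t
    rw [← winv t]
    calc mn t = ∑ i, w i * mn t := by rw [← Finset.sum_mul, hw1, one_mul]
      _ ≤ ∑ i, w i * v t i :=
          Finset.sum_le_sum fun i _ => mul_le_mul_of_nonneg_left (hvge t i) (hw0 i)

  have hbound : ∀ t, ‖v t i₀ - w j‖ ≤ M t - mn t := by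
    intro t
    rw [Real.norm_eq_abs, abs_le]
    constructor
    · linarith [hvge t i₀, wle t]
    · linarith [hvle t i₀, wge t]
  have : Tendsto (fun t => v t i₀ - w j) atTop (𝓝 0) :=
    squeeze_zero_norm hbound osc_tendsto
  have := this.add (tendsto_const_nhds (x := w j))
  simpa using this

lemma reach (P Q : Matrix (Fin n) (Fin n) ℝ)
    (hQ0 : ∀ i j, 0 ≤ Q i j)
    (m : ℕ) (hPm : ∀ i j, 0 < (P ^ m) i j) (hP0 : ∀ i j, 0 ≤ P i j)
    (A : Finset (Fin n)) (hane : A.Nonempty)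
    (hdom : ∀ l, l ∉ A → ∀ p, 0 < P l p → 0 < Q l p)
    (l : Fin n) (hl : l ∉ A) :
    ∃ t, 0 < ∑ j ∈ A, (Q ^ t) l j := by
  by_contra hcon
  push_neg at hcon
  have hzero : ∀ t, ∀ a ∈ A, (Q ^ t) l a = 0 := by
    intro t a ha
    have h1 : ∑ j ∈ A, (Q ^ t) l j ≤ 0 := hcon t
    have h2 : ∀ j ∈ A, 0 ≤ (Q ^ t) l j := fun j _ => pow_nonneg' Q hQ0 t l j
    have := Finset.sum_eq_zero_iff_of_nonneg h2
    have hs : ∑ j ∈ A, (Q ^ t) l j = 0 := le_antisymm h1 (Finset.sum_nonneg h2)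
    exact (this.1 hs) a ha
  -- reachable set
  set R : Set (Fin n) := {p | ∃ t, 0 < (Q ^ t) l p} with hR
  have hlR : l ∈ R := ⟨0, by simp [Matrix.one_apply]⟩
  have hRA : ∀ p ∈ R, p ∉ A := by
    rintro p ⟨t, hp⟩ hpA
    have := hzero t p hpA
    linarith
  have hstep : ∀ p ∈ R, ∀ q, 0 < Q p q → q ∈ R := by
    rintro p ⟨t, hp⟩ q hq
    refine ⟨t + 1, ?_⟩
    have : (Q ^ (t + 1)) l q = ∑ u, (Q ^ t) l u * Q u q := by
      rw [pow_succ, Matrix.mul_apply]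
    rw [this]
    have : (Q ^ t) l p * Q p q ≤ ∑ u, (Q ^ t) l u * Q u q := by
      apply Finset.single_le_sum (f := fun u => (Q ^ t) l u * Q u q)
        (fun u _ => mul_nonneg (pow_nonneg' Q hQ0 t l u) (hQ0 u q)) (mem_univ p)
    nlinarith
  have hPstep : ∀ s, ∀ p ∈ R, ∀ q, 0 < (P ^ s) p q → q ∈ R := by
    intro s
    induction s with
    | zero =>
        intro p hp q hq
        simp only [pow_zero, Matrix.one_apply] at hq
        by_cases h : p = q
        · exact h ▸ hp
        · simp [h] at hq
    | succ s ih =>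
        intro p hp q hq
        rw [pow_succ, Matrix.mul_apply] at hq
        have : ∃ u, 0 < (P ^ s) p u * P u q := by
          by_contra hc
          push_neg at hc
          have : ∑ u, (P ^ s) p u * P u q ≤ 0 := Finset.sum_nonpos fun u _ => hc u
          linarith
        obtain ⟨u, hu⟩ := this
        have h1 : 0 < (P ^ s) p u := by
          rcases lt_or_ge 0 ((P ^ s) p u) with h | h
          · exact h
          · nlinarith [hP0 u q, pow_nonneg' P hP0 s p u]
        have h2 : 0 < P u q := by
          nlinarith [pow_nonneg' P hP0 s p u]
        have huR : u ∈ R := ih p hp u h1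
        exact hstep u huR q (hdom u (hRA u huR) q h2)
  obtain ⟨a, ha⟩ := hane
  exact hRA a (hPstep m l hlR a (hPm l a)) ha

/-- transient mass vanishes -/
lemma absorb (Q : Matrix (Fin n) (Fin n) ℝ)
    (hQ0 : ∀ i j, 0 ≤ Q i j) (hQ1 : ∀ i, ∑ j, Q i j = 1)
    (A : Finset (Fin n))
    (habs : ∀ a ∈ A, ∀ j, Q a j = if a = j then 1 else 0)
    (hreach : ∀ l, l ∉ A → ∃ t, 0 < ∑ j ∈ A, (Q ^ t) l j)
    (k : Fin n) (hk : k ∉ A) (j : Fin n) (hj : j ∉ A) :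
    Tendsto (fun t : ℕ => (Q ^ t) k j) atTop (𝓝 0) := by
  classical
  set T : Finset (Fin n) := univ \ A with hT
  have hkT : k ∈ T := by simp [hT, hk]
  have hTne : T.Nonempty := ⟨k, hkT⟩
  set f : Fin n → ℕ → ℝ := fun l t => ∑ j ∈ T, (Q ^ t) l j with hf
  have hf0 : ∀ l t, 0 ≤ f l t := fun l t =>
    Finset.sum_nonneg fun j _ => pow_nonneg' Q hQ0 t l j
  have hfA : ∀ a ∈ A, ∀ t, f a t = 0 := by
    intro a ha t
    apply Finset.sum_eq_zero
    intro j hj'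
    rw [pow_absorbing Q a (habs a ha) t j]
    have : a ≠ j := by
      intro h
      rw [hT] at hj'; simp at hj'
      exact hj' (h ▸ ha)
    simp [this]
  have hrecg : ∀ s t l, f l (s + t) = ∑ p, (Q ^ s) l p * f p t := by
    intro s t l
    simp only [hf]
    have : ∀ j, (Q ^ (s + t)) l j = ∑ p, (Q ^ s) l p * (Q ^ t) p j := fun j => by
      rw [pow_add, Matrix.mul_apply]
    rw [Finset.sum_congr rfl fun j _ => this j, Finset.sum_comm]
    exact Finset.sum_congr rfl fun p _ => by rw [Finset.mul_sum]
  have hrec : ∀ l t, f l (t + 1) = ∑ p, Q l p * f p t := by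
    intro l t
    have h := hrecg 1 t l
    rw [Nat.add_comm 1 t] at h
    simpa [pow_one] using h
  have hfsucc : ∀ t l, f l (t + 1) ≤ f l t := by
    intro t
    induction t with
    | zero =>
        intro l
        by_cases hl : l ∈ A
        · rw [hfA l hl, hfA l hl]
        · have hlT : l ∈ T := by simp [hT, hl]
          have h0 : f l 0 = 1 := by
            simp only [hf, pow_zero]
            rw [Finset.sum_eq_single l]
            · simp [Matrix.one_apply]
            · intro b _ hb; simp [Matrix.one_apply, (Ne.symm hb : l ≠ b)]
            · intro h; exact absurd hlT h
          rw [h0]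
          calc f l 1 ≤ ∑ j, (Q ^ 1) l j :=
                Finset.sum_le_sum_of_subset_of_nonneg (Finset.sdiff_subset)
                  (fun j _ _ => pow_nonneg' Q hQ0 1 l j)
            _ = 1 := pow_rowsum Q hQ1 1 l
    | succ t ih =>
        intro l
        rw [hrec l (t+1), hrec l t]
        exact Finset.sum_le_sum fun p _ =>
          mul_le_mul_of_nonneg_left (ih p) (hQ0 l p)
  have hfanti : ∀ l, ∀ s t, s ≤ t → f l t ≤ f l s := fun l s t hst =>
    antitone_nat_of_succ_le (fun t => hfsucc t l) hst
  set u : ℕ → ℝ := fun t => T.sup' hTne (fun l => f l t) with hu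
  have hu0 : ∀ t, 0 ≤ u t := fun t =>
    le_trans (hf0 k t) (Finset.le_sup' (fun l => f l t) hkT)
  have huanti : ∀ s t, s ≤ t → u t ≤ u s := by
    intro s t hst
    apply Finset.sup'_le
    intro l hl
    exact le_trans (hfanti l s t hst) (Finset.le_sup' (fun l => f l s) hl)
  have hsplit : ∀ l t, f l t + ∑ j ∈ A, (Q ^ t) l j = 1 := by
    intro l t
    simp only [hf, hT]
    rw [Finset.sum_sdiff (Finset.subset_univ A)]
    exact pow_rowsum Q hQ1 t l
  have hall : ∀ l : Fin n, ∃ tl : ℕ, 1 ≤ tl ∧ (l ∈ T → f l tl < 1) := by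
    intro l
    by_cases hl : l ∈ T
    · have hlA : l ∉ A := by rw [hT] at hl; simp at hl; exact hl
      obtain ⟨t0, ht0⟩ := hreach l hlA
      refine ⟨max t0 1, le_max_right _ _, fun _ => ?_⟩
      have h1 : f l t0 < 1 := by
        have := hsplit l t0
        linarith
      exact lt_of_le_of_lt (hfanti l t0 (max t0 1) (le_max_left _ _)) h1
    · exact ⟨1, le_refl _, fun h => absurd h hl⟩
  choose g hg1 hg2 using hall
  set ts : ℕ := univ.sup g with hts
  have hts1 : 1 ≤ ts := le_trans (hg1 k) (Finset.le_sup (mem_univ k))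
  set β : ℝ := u ts with hβ
  have hβ1 : β < 1 := by
    rw [hβ, hu]
    apply Finset.sup'_lt_iff hTne |>.2
    intro l hl
    exact lt_of_le_of_lt (hfanti l (g l) ts (Finset.le_sup (mem_univ l))) (hg2 l hl)
  have hβ0 : 0 ≤ β := hu0 ts
  have husub : ∀ t, u (ts + t) ≤ β * u t := by
    intro t
    apply Finset.sup'_le
    intro l hl
    rw [hrecg ts t l]
    have e1 : ∑ p, (Q ^ ts) l p * f p t = ∑ p ∈ T, (Q ^ ts) l p * f p t := by
      rw [hT]
      rw [← Finset.sum_sdiff (Finset.subset_univ A) (f := fun p => (Q ^ ts) l p * f p t)]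
      have : ∑ p ∈ A, (Q ^ ts) l p * f p t = 0 :=
        Finset.sum_eq_zero fun p hp => by rw [hfA p hp t, mul_zero]
      rw [this, add_zero]
    rw [e1]
    calc ∑ p ∈ T, (Q ^ ts) l p * f p t
        ≤ ∑ p ∈ T, (Q ^ ts) l p * u t := by
          apply Finset.sum_le_sum
          intro p hp
          exact mul_le_mul_of_nonneg_left (Finset.le_sup' (fun l => f l t) hp)
            (pow_nonneg' Q hQ0 ts l p)
      _ = f l ts * u t := by rw [← Finset.sum_mul]
      _ ≤ β * u t := mul_le_mul_of_nonneg_right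
            (Finset.le_sup' (fun l => f l ts) hl) (hu0 t)
  have hugeo : ∀ s, u (s * ts) ≤ β ^ s := by
    intro s
    induction s with
    | zero =>
        simp only [Nat.zero_mul, pow_zero]
        apply Finset.sup'_le
        intro l hl
        rcases Finset.mem_sdiff.1 (hT ▸ hl) with ⟨_, hlA⟩
        have h2 : 0 ≤ ∑ j ∈ A, (Q ^ 0) l j :=
          Finset.sum_nonneg fun j _ => pow_nonneg' Q hQ0 0 l j
        linarith [hsplit l 0]
    | succ s ih =>
        have : (s + 1) * ts = ts + s * ts := by ring
        rw [this, pow_succ]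
        calc u (ts + s * ts) ≤ β * u (s * ts) := husub _
          _ ≤ β * β ^ s := mul_le_mul_of_nonneg_left ih hβ0
          _ = β ^ s * β := mul_comm _ _
  have hut : Tendsto u atTop (𝓝 0) :=
    geom_decay u ts hts1 β hβ0 hβ1 hu0 huanti hugeo
  have hjT : j ∈ T := by simp [hT, hj]
  apply squeeze_zero (fun t => pow_nonneg' Q hQ0 t k j)
  · intro t
    calc (Q ^ t) k j ≤ f k t :=
          Finset.single_le_sum (f := fun j => (Q ^ t) k j)
            (fun j _ => pow_nonneg' Q hQ0 t k j) hjT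
      _ ≤ u t := Finset.le_sup' (fun l => f l t) hkT
  · exact hut

lemma Qent (P : Matrix (Fin n) (Fin n) ℝ) (y : Fin n → ℝ) (i j : Fin n) :
    ((1 - Matrix.diagonal y) * P + Matrix.diagonal y) i j
      = (1 - y i) * P i j + (if i = j then y i else 0) := by
  rw [Matrix.add_apply, Matrix.mul_apply]
  rw [Finset.sum_eq_single i]
  · simp [Matrix.sub_apply, Matrix.one_apply, Matrix.diagonal_apply]
  · intro k _ hk
    simp [Matrix.sub_apply, Matrix.one_apply, Matrix.diagonal_apply, Ne.symm hk]
  · simp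

lemma Q0 (P : Matrix (Fin n) (Fin n) ℝ) (hPnn : ∀ i j, 0 ≤ P i j)
    (y : Fin n → ℝ) (hy : ∀ i, y i ∈ Set.Icc (0:ℝ) 1) (i j : Fin n) :
    0 ≤ ((1 - Matrix.diagonal y) * P + Matrix.diagonal y) i j := by
  rw [Qent]
  have h1 := (hy i).1
  have h2 := (hy i).2
  have : 0 ≤ (1 - y i) * P i j := mul_nonneg (by linarith) (hPnn i j)
  split <;> linarith

lemma Q1 (P : Matrix (Fin n) (Fin n) ℝ) (hProw : ∀ i, ∑ j, P i j = 1)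
    (y : Fin n → ℝ) (i : Fin n) :
    ∑ j, ((1 - Matrix.diagonal y) * P + Matrix.diagonal y) i j = 1 := by
  simp only [Qent]
  rw [Finset.sum_add_distrib, ← Finset.mul_sum, hProw i, Finset.sum_ite_eq univ i]
  simp

-- H has nonneg entries summing to 1 along rows
lemma Hrow (P : Matrix (Fin n) (Fin n) ℝ) (hProw : ∀ i, ∑ j, P i j = 1)
    (H : (Fin n → ℝ) → Matrix (Fin n) (Fin n) ℝ)
    (hH : ∀ z : Fin n → ℝ, (∀ i, z i ∈ Set.Icc (0 : ℝ) 1) →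
      ∀ i j, Tendsto
        (fun t : ℕ => (((1 - Matrix.diagonal z) * P + Matrix.diagonal z) ^ t) i j)
        atTop (𝓝 (H z i j)))
    (y : Fin n → ℝ) (hy : ∀ i, y i ∈ Set.Icc (0:ℝ) 1) (i : Fin n) :
    ∑ j, H y i j = 1 := by
  have h1 : Tendsto (fun t : ℕ =>
      ∑ j, (((1 - Matrix.diagonal y) * P + Matrix.diagonal y) ^ t) i j)
      atTop (𝓝 (∑ j, H y i j)) :=
    tendsto_finset_sum _ fun j _ => hH y hy i j
  have h2 : (fun t : ℕ =>
      ∑ j, (((1 - Matrix.diagonal y) * P + Matrix.diagonal y) ^ t) i j)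
      = fun _ => (1:ℝ) := by
    funext t
    exact pow_rowsum _ (Q1 P hProw y) t i
  rw [h2] at h1
  exact tendsto_nhds_unique h1 tendsto_const_nhds

lemma Hnn (P : Matrix (Fin n) (Fin n) ℝ) (hPnn : ∀ i j, 0 ≤ P i j)
    (H : (Fin n → ℝ) → Matrix (Fin n) (Fin n) ℝ)
    (hH : ∀ z : Fin n → ℝ, (∀ i, z i ∈ Set.Icc (0 : ℝ) 1) →
      ∀ i j, Tendsto
        (fun t : ℕ => (((1 - Matrix.diagonal z) * P + Matrix.diagonal z) ^ t) i j)
        atTop (𝓝 (H z i j)))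
    (y : Fin n → ℝ) (hy : ∀ i, y i ∈ Set.Icc (0:ℝ) 1) (i j : Fin n) :
    0 ≤ H y i j :=
  le_of_tendsto_of_tendsto tendsto_const_nhds (hH y hy i j)
    (Filter.Eventually.of_forall fun t => pow_nonneg' _ (Q0 P hPnn y hy) t i j)

lemma Habs (P : Matrix (Fin n) (Fin n) ℝ)
    (H : (Fin n → ℝ) → Matrix (Fin n) (Fin n) ℝ)
    (hH : ∀ z : Fin n → ℝ, (∀ i, z i ∈ Set.Icc (0 : ℝ) 1) →
      ∀ i j, Tendsto
        (fun t : ℕ => (((1 - Matrix.diagonal z) * P + Matrix.diagonal z) ^ t) i j)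
        atTop (𝓝 (H z i j)))
    (y : Fin n → ℝ) (hy : ∀ i, y i ∈ Set.Icc (0:ℝ) 1) (a : Fin n) (ha : y a = 1)
    (j : Fin n) : H y a j = if a = j then 1 else 0 := by
  have hrow : ∀ k, ((1 - Matrix.diagonal y) * P + Matrix.diagonal y) a k
      = if a = k then 1 else 0 := by
    intro k
    rw [Qent, ha]
    simp
  have h1 : (fun t : ℕ =>
      (((1 - Matrix.diagonal y) * P + Matrix.diagonal y) ^ t) a j)
      = fun _ => (if a = j then (1:ℝ) else 0) := by
    funext t
    exact pow_absorbing _ a hrow t j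
  have h2 := hH y hy a j
  rw [h1] at h2
  exact tendsto_nhds_unique h2 tendsto_const_nhds

lemma pow_dominate (M N : Matrix (Fin n) (Fin n) ℝ) (c : ℝ) (hc : 0 ≤ c)
    (hM : ∀ i j, 0 ≤ M i j) (h : ∀ i j, c * M i j ≤ N i j) :
    ∀ t i j, c ^ t * (M ^ t) i j ≤ (N ^ t) i j := by
  intro t
  induction t with
  | zero => intro i j; simp
  | succ t ih =>
      intro i j
      simp only [pow_succ, Matrix.mul_apply, Finset.mul_sum]
      apply Finset.sum_le_sum
      intro k _
      have e : c ^ t * c * ((M ^ t) i k * M k j)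
          = (c ^ t * (M ^ t) i k) * (c * M k j) := by ring
      rw [e]
      apply mul_le_mul (ih i k) (h k j)
        (mul_nonneg hc (hM k j))
        (le_trans (mul_nonneg (by positivity) (pow_nonneg' M hM t i k)) (ih i k))

/-- interior identification of H -/
lemma Hident (hn : 2 ≤ n)
    (P : Matrix (Fin n) (Fin n) ℝ)
    (hPnn : ∀ i j, 0 ≤ P i j) (hProw : ∀ i, ∑ j, P i j = 1)
    (hPprim : ∃ m : ℕ, ∀ i j, 0 < (P ^ m) i j)
    (π : Fin n → ℝ) (hπpos : ∀ i, 0 < π i)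
    (hπinv : ∀ j, ∑ i, π i * P i j = π j)
    (H : (Fin n → ℝ) → Matrix (Fin n) (Fin n) ℝ)
    (hH : ∀ z : Fin n → ℝ, (∀ i, z i ∈ Set.Icc (0 : ℝ) 1) →
      ∀ i j, Tendsto
        (fun t : ℕ => (((1 - Matrix.diagonal z) * P + Matrix.diagonal z) ^ t) i j)
        atTop (𝓝 (H z i j)))
    (y : Fin n → ℝ) (hy : ∀ i, y i ∈ Set.Icc (0:ℝ) 1) (hylt : ∀ i, y i < 1)
    (i j : Fin n) :
    H y i j = (π j / (1 - y j)) / (∑ k, π k / (1 - y k)) := by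
  have hnpos : 0 < n := by omega
  have ne : (univ : Finset (Fin n)).Nonempty := ⟨⟨0, hnpos⟩, mem_univ _⟩
  set Q : Matrix (Fin n) (Fin n) ℝ := (1 - Matrix.diagonal y) * P + Matrix.diagonal y
    with hQ
  set x : Fin n → ℝ := fun k => π k / (1 - y k) with hx
  have hxpos : ∀ k, 0 < x k := fun k => div_pos (hπpos k) (by linarith [hylt k])
  set S : ℝ := ∑ k, x k with hS
  have hSpos : 0 < S := Finset.sum_pos (fun k _ => hxpos k) ne
  set w : Fin n → ℝ := fun k => x k / S with hw
  have hw0 : ∀ k, 0 ≤ w k := fun k => le_of_lt (div_pos (hxpos k) hSpos)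
  have hw1 : ∑ k, w k = 1 := by
    rw [hw, ← Finset.sum_div]
    exact div_self (ne_of_gt hSpos)
  have hxcancel : ∀ k, x k * (1 - y k) = π k := by
    intro k
    have hne : (1 : ℝ) - y k ≠ 0 := by linarith [hylt k]
    rw [hx]
    exact div_mul_cancel₀ _ hne
  have hwQ : ∀ k, ∑ l, w l * Q l k = w k := by
    intro k
    have e1 : ∀ l, w l * Q l k = (x l * ((1 - y l) * P l k)
        + x l * (if l = k then y l else 0)) / S := by
      intro l
      rw [hw, hQ, Qent, div_mul_eq_mul_div, mul_add]
    rw [Finset.sum_congr rfl fun l _ => e1 l, ← Finset.sum_div,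
      Finset.sum_add_distrib]
    have e2 : ∑ l, x l * ((1 - y l) * P l k) = π k := by
      rw [← hπinv k]
      refine Finset.sum_congr rfl fun l _ => ?_
      rw [← mul_assoc, hxcancel l]
    have e3 : ∑ l, x l * (if l = k then y l else 0) = x k * y k := by
      rw [Finset.sum_eq_single k] <;> simp_all
    rw [e2, e3, hw]
    have : π k + x k * y k = x k := by
      have := hxcancel k
      nlinarith
    rw [this]
  obtain ⟨m, hPm⟩ := hPprim
  have hm1 : 1 ≤ m := by
    by_contra hm
    have hm0 : m = 0 := by omega
    have := hPm ⟨0, by omega⟩ ⟨1, by omega⟩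
    rw [hm0] at this
    simp [Matrix.one_apply, Fin.ext_iff] at this
  set ε : ℝ := univ.inf' ne (fun k => 1 - y k) with hε
  have hεpos : 0 < ε := by
    rw [hε]
    apply Finset.lt_inf'_iff ne |>.2
    intro k _
    linarith [hylt k]
  have hdom : ∀ a b, ε * P a b ≤ Q a b := by
    intro a b
    rw [hQ, Qent]
    have h1 : ε ≤ 1 - y a := Finset.inf'_le _ (mem_univ a)
    have h2 : 0 ≤ (if a = b then y a else 0) := by
      split
      · exact (hy a).1
      · exact le_refl 0
    have := mul_le_mul_of_nonneg_right h1 (hPnn a b)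
    split <;> nlinarith [(hy a).1]
  set c0 : ℝ := (univ : Finset (Fin n × Fin n)).inf'
      ⟨(⟨0, hnpos⟩, ⟨0, hnpos⟩), mem_univ _⟩ (fun p => (P ^ m) p.1 p.2) with hc0
  have hc0pos : 0 < c0 := by
    rw [hc0]
    apply Finset.lt_inf'_iff _ |>.2
    intro p _
    exact hPm p.1 p.2
  have hQm : ∀ a b, ε ^ m * c0 ≤ (Q ^ m) a b := by
    intro a b
    calc ε ^ m * c0 ≤ ε ^ m * (P ^ m) a b := by
          apply mul_le_mul_of_nonneg_left _ (by positivity)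
          exact Finset.inf'_le _ (mem_univ (a, b))
      _ ≤ (Q ^ m) a b := pow_dominate P Q ε (le_of_lt hεpos) hPnn hdom m a b
  have hconv := conv_limit hn Q (Q0 P hPnn y hy) (Q1 P hProw y) m hm1
    (ε ^ m * c0) (by positivity) hQm w hw0 hw1 hwQ i j
  exact tendsto_nhds_unique (hH y hy i j) (hconv)

lemma key_alg (σ A B x y : ℝ) (hσ : 0 < σ) (hA : 0 < A) (hx : 0 < x) (hy : 0 < y)
    (hfoc : σ * A * x = B) (hxy : x ≠ y) :
    (σ * x ^ 2 + B) / (x + A) ^ 2 < (σ * y ^ 2 + B) / (y + A) ^ 2 := by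
  rw [div_lt_div_iff₀ (by positivity) (by positivity)]
  have key : (σ * y ^ 2 + B) * (x + A) ^ 2 - (σ * x ^ 2 + B) * (y + A) ^ 2
      = σ * A * (x + A) * (y - x) ^ 2 := by rw [← hfoc]; ring
  have h2 : 0 < (y - x) ^ 2 := by
    have : y - x ≠ 0 := sub_ne_zero.2 (Ne.symm hxy)
    positivity
  nlinarith [mul_pos (mul_pos (mul_pos hσ hA) (by linarith : (0:ℝ) < x + A)) h2]

lemma glt1 (σ A B x : ℝ) (hσ : 0 < σ) (hA : 0 < A) (hx : 0 < x)
    (hfoc : σ * A * x = B) :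
    (σ * x ^ 2 + B) / (x + A) ^ 2 < σ := by
  rw [div_lt_iff₀ (by positivity)]
  nlinarith [mul_pos (mul_pos hσ hA) hx, mul_pos hσ (mul_pos hA hA)]

lemma glarge (σ A B y : ℝ) (hσ : 0 < σ) (hA : 0 < A) (hy : 0 < y)
    (hB : B < σ * (2 * A * y + A ^ 2)) :
    (σ * y ^ 2 + B) / (y + A) ^ 2 < σ := by
  rw [div_lt_iff₀ (by positivity)]
  nlinarith

lemma sum_sq_le_one {n : ℕ} (s : Finset (Fin n)) (a : Fin n → ℝ)
    (h0 : ∀ j ∈ s, 0 ≤ a j) (h1 : ∑ j ∈ s, a j = 1) :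
    ∑ j ∈ s, (a j) ^ 2 ≤ 1 := by
  have hle : ∀ j ∈ s, (a j) ^ 2 ≤ a j := by
    intro j hj
    have : a j ≤ 1 := by
      rw [← h1]
      exact Finset.single_le_sum h0 hj
    nlinarith [h0 j hj]
  calc ∑ j ∈ s, (a j) ^ 2 ≤ ∑ j ∈ s, a j := Finset.sum_le_sum hle
    _ = 1 := h1

end Stmt11

open Stmt11

/-- The set of strict Nash equilibria equals `Z*`: a profile
`z ∈ [0,1]ⁿ` is a strict Nash equilibrium (for every agent `i` and every
`z̄_i ∈ [0,1]` with `z̄_i ≠ z_i`, `v_i(z) < v_i(z̄_i, z_{-i})`) if and only if there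
exists `α` with `0 < α ≤ α_* = 1/max_i(π_i σ_i²)` such that `z_i = 1 - α π_i σ_i²`
for every `i`. -/
theorem stmt_11 (n : ℕ) (hn : 2 ≤ n)
    (P : Matrix (Fin n) (Fin n) ℝ)
    (hPnn : ∀ i j, 0 ≤ P i j)
    (hProw : ∀ i, ∑ j, P i j = 1)
    (hPdiag : ∀ i, P i i = 0)
    (hPprim : ∃ m : ℕ, ∀ i j, 0 < (P ^ m) i j)
    (π : Fin n → ℝ)
    (hπpos : ∀ i, 0 < π i)
    (hπsum : ∑ i, π i = 1)
    (hπinv : ∀ j, ∑ i, π i * P i j = π j)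
    (σ2 : Fin n → ℝ) (hσ : ∀ i, 0 < σ2 i)
    (H : (Fin n → ℝ) → Matrix (Fin n) (Fin n) ℝ)
    (hH : ∀ z : Fin n → ℝ, (∀ i, z i ∈ Set.Icc (0 : ℝ) 1) →
      ∀ i j, Tendsto
        (fun t : ℕ => (((1 - Matrix.diagonal z) * P + Matrix.diagonal z) ^ t) i j)
        atTop (𝓝 (H z i j)))
    (z : Fin n → ℝ) (hz : ∀ i, z i ∈ Set.Icc (0 : ℝ) 1) :
    ((∀ i : Fin n, ∀ t ∈ Set.Icc (0 : ℝ) 1, t ≠ z i →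
        ∑ j, (H z i j) ^ 2 * σ2 j <
          ∑ j, (H (Function.update z i t) i j) ^ 2 * σ2 j)
      ↔ ∃ α : ℝ, 0 < α ∧
          α ≤ 1 / (Finset.univ.sup' ⟨⟨0, by omega⟩, Finset.mem_univ _⟩
                    fun i => π i * σ2 i) ∧
          ∀ i, z i = 1 - α * (π i * σ2 i)) := by
  classical
  have hnpos : 0 < n := by omega
  have ne : (univ : Finset (Fin n)).Nonempty := ⟨⟨0, hnpos⟩, mem_univ _⟩
  -- value of v_i at interior profiles, split at coordinate i
  have hvval : ∀ u : Fin n → ℝ, (∀ k, u k ∈ Set.Icc (0:ℝ) 1) → (∀ k, u k < 1) →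
      ∀ i, ∑ j, (H u i j) ^ 2 * σ2 j
        = (σ2 i * (π i / (1 - u i)) ^ 2
            + ∑ j ∈ univ.erase i, σ2 j * (π j / (1 - u j)) ^ 2)
          / ((π i / (1 - u i)) + ∑ j ∈ univ.erase i, π j / (1 - u j)) ^ 2 := by
    intro u hu hult i
    have hid := Hident hn P hPnn hProw hPprim π hπpos hπinv H hH u hu hult i
    set S := ∑ k, π k / (1 - u k) with hS
    have e1 : ∀ j, (H u i j) ^ 2 * σ2 j = σ2 j * (π j / (1 - u j)) ^ 2 / S ^ 2 := by
      intro j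
      rw [hid j, div_pow]
      ring
    rw [Finset.sum_congr rfl fun j _ => e1 j, ← Finset.sum_div]
    have e2 : ∑ j, σ2 j * (π j / (1 - u j)) ^ 2
        = σ2 i * (π i / (1 - u i)) ^ 2 + ∑ j ∈ univ.erase i, σ2 j * (π j / (1 - u j)) ^ 2 :=
      (Finset.add_sum_erase _ _ (mem_univ i)).symm
    have e3 : S = (π i / (1 - u i)) + ∑ j ∈ univ.erase i, π j / (1 - u j) :=
      (Finset.add_sum_erase _ _ (mem_univ i)).symm
    rw [e2, e3]
  -- updates stay in the cube
  have hcube : ∀ (i : Fin n) (t : ℝ), t ∈ Set.Icc (0:ℝ) 1 →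
      ∀ k, Function.update z i t k ∈ Set.Icc (0:ℝ) 1 := by
    intro i t ht k
    by_cases hk : k = i
    · subst hk; rw [Function.update_self]; exact ht
    · rw [Function.update_of_ne hk]; exact hz k
  -- erase sums are unchanged by updates
  have herase1 : ∀ (i : Fin n) (t : ℝ),
      ∑ j ∈ univ.erase i, π j / (1 - Function.update z i t j)
        = ∑ j ∈ univ.erase i, π j / (1 - z j) := by
    intro i t
    refine Finset.sum_congr rfl fun j hj => ?_
    rw [Function.update_of_ne (Finset.ne_of_mem_erase hj)]
  have herase2 : ∀ (i : Fin n) (t : ℝ),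
      ∑ j ∈ univ.erase i, σ2 j * (π j / (1 - Function.update z i t j)) ^ 2
        = ∑ j ∈ univ.erase i, σ2 j * (π j / (1 - z j)) ^ 2 := by
    intro i t
    refine Finset.sum_congr rfl fun j hj => ?_
    rw [Function.update_of_ne (Finset.ne_of_mem_erase hj)]
  constructor
  · intro hNash
    obtain ⟨m, hPm⟩ := hPprim
    -- Step 1: no agent can play 1 at a strict Nash equilibrium
    have hzlt : ∀ k, z k < 1 := by
      by_contra hc
      push_neg at hc
      obtain ⟨i₁, hi₁⟩ := hc
      have hz1 : z i₁ = 1 := le_antisymm (hz i₁).2 hi₁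
      set Af : Finset (Fin n) := univ.filter (fun j => z j = 1) with hAf
      have hAfne : Af.Nonempty := ⟨i₁, by simp [hAf, hz1]⟩
      obtain ⟨i, hiA, himax⟩ := Finset.exists_max_image Af σ2 hAfne
      have hzi : z i = 1 := by simpa [hAf] using hiA
      have hvz : ∑ j, (H z i j) ^ 2 * σ2 j = σ2 i := by
        rw [Finset.sum_eq_single i]
        · rw [Habs P H hH z hz i hzi i]; simp
        · intro b _ hb
          rw [Habs P H hH z hz i hzi b]; simp [Ne.symm hb]
        · simp
      have hierase : (univ.erase i).Nonempty := by
        have : Nontrivial (Fin n) := Fin.nontrivial_iff_two_le.mpr hn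
        obtain ⟨k, hk⟩ := exists_ne i
        exact ⟨k, Finset.mem_erase.2 ⟨hk, mem_univ k⟩⟩
      by_cases hA1 : ∀ j, j ≠ i → z j < 1
      · -- i is the only agent playing 1: deviate to a large interior x-value
        set Ai := ∑ j ∈ univ.erase i, π j / (1 - z j) with hAi
        set Bi := ∑ j ∈ univ.erase i, σ2 j * (π j / (1 - z j)) ^ 2 with hBi
        have hApos : 0 < Ai := by
          apply Finset.sum_pos _ hierase
          intro j hj
          have := hA1 j (Finset.ne_of_mem_erase hj)
          exact div_pos (hπpos j) (by linarith)
        have hBpos : 0 < Bi := by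
          apply Finset.sum_pos _ hierase
          intro j hj
          have := hA1 j (Finset.ne_of_mem_erase hj)
          exact mul_pos (hσ j) (pow_pos (div_pos (hπpos j) (by linarith)) 2)
        set y : ℝ := π i + Bi / (σ2 i * Ai) with hy2
        have hσA : 0 < σ2 i * Ai := mul_pos (hσ i) hApos
        have hypos : 0 < y := by
          rw [hy2]
          exact add_pos (hπpos i) (div_pos hBpos hσA)
        have hyπ : π i ≤ y := by
          rw [hy2]
          nlinarith [div_pos hBpos hσA]
        set t : ℝ := 1 - π i / y with ht
        have htlt : t < 1 := by
          rw [ht]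
          have : 0 < π i / y := div_pos (hπpos i) hypos
          linarith
        have htmem : t ∈ Set.Icc (0:ℝ) 1 := by
          constructor
          · rw [ht]
            have : π i / y ≤ 1 := (div_le_one hypos).2 hyπ
            linarith
          · exact le_of_lt htlt
        have htne : t ≠ z i := by rw [hzi]; exact ne_of_lt htlt
        have hult : ∀ k, Function.update z i t k < 1 := by
          intro k
          by_cases hk : k = i
          · subst hk; rw [Function.update_self]; exact htlt
          · rw [Function.update_of_ne hk]; exact hA1 k hk
        have hyt : π i / (1 - t) = y := by
          have h1t : 1 - t = π i / y := by rw [ht]; ring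
          rw [h1t]
          exact div_div_cancel₀ (ne_of_gt (hπpos i))
        have hvz' : ∑ j, (H (Function.update z i t) i j) ^ 2 * σ2 j
            = (σ2 i * y ^ 2 + Bi) / (y + Ai) ^ 2 := by
          rw [hvval _ (hcube i t htmem) hult i, Function.update_self,
            herase1, herase2, hyt]
        have hBy : σ2 i * Ai * y = σ2 i * Ai * π i + Bi := by
          rw [hy2]
          have hσne : σ2 i ≠ 0 := ne_of_gt (hσ i)
          have hAne : Ai ≠ 0 := ne_of_gt hApos
          field_simp
        have hlt : (σ2 i * y ^ 2 + Bi) / (y + Ai) ^ 2 < σ2 i := by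
          apply glarge _ _ _ _ (hσ i) hApos hypos
          nlinarith [hBy, mul_pos (hσ i) (mul_pos hApos hApos),
            mul_pos hσA (hπpos i)]
        have Nash := hNash i t htmem htne
        rw [hvz, hvz'] at Nash
        linarith
      · -- some other agent also plays 1
        push_neg at hA1
        obtain ⟨a, hane, ha1⟩ := hA1
        have hza : z a = 1 := le_antisymm (hz a).2 ha1
        have htmem : (0:ℝ) ∈ Set.Icc (0:ℝ) 1 := ⟨le_refl 0, zero_le_one⟩
        have htne : (0:ℝ) ≠ z i := by rw [hzi]; norm_num
        set z' := Function.update z i 0 with hz'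
        have hz'cube : ∀ k, z' k ∈ Set.Icc (0:ℝ) 1 := hcube i 0 htmem
        set Af' : Finset (Fin n) := univ.filter (fun j => z' j = 1) with hAf'
        have haA' : a ∈ Af' := by
          simp only [hAf', mem_filter, mem_univ, true_and, hz']
          rw [Function.update_of_ne hane]
          exact hza
        have hiA' : i ∉ Af' := by
          simp only [hAf', mem_filter, mem_univ, true_and, hz']
          rw [Function.update_self]
          norm_num
        have hQ0' := Q0 P hPnn z' hz'cube
        have hQ1' := Q1 P hProw z'
        have hzero : ∀ j, j ∉ Af' → H z' i j = 0 := by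
          intro j hj
          refine tendsto_nhds_unique (hH z' hz'cube i j)
            (absorb _ hQ0' hQ1' Af' ?_ ?_ i hiA' j hj)
          · intro b hb k
            have hzb : z' b = 1 := by
              simpa [hAf'] using hb
            rw [Qent, hzb]
            simp
          · intro l hl
            apply reach P _ hQ0' m hPm hPnn Af' ⟨a, haA'⟩ _ l hl
            intro l' hl' p hp
            have hl'lt : z' l' < 1 := by
              apply lt_of_le_of_ne (hz'cube l').2
              simpa [hAf'] using hl'
            rw [Qent]
            have h1 : 0 < (1 - z' l') * P l' p := mul_pos (by linarith) hp
            have h2 : (0:ℝ) ≤ if l' = p then z' l' else 0 := by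
              split
              · exact (hz'cube l').1
              · exact le_refl 0
            linarith
        have hrow1 : ∑ j ∈ Af', H z' i j = 1 := by
          rw [← Hrow P hProw H hH z' hz'cube i]
          exact Finset.sum_subset (Finset.subset_univ _)
            (fun x _ hx => hzero x hx)
        have hbound : ∑ j, (H z' i j) ^ 2 * σ2 j ≤ σ2 i := by
          have e : ∑ j, (H z' i j) ^ 2 * σ2 j = ∑ j ∈ Af', (H z' i j) ^ 2 * σ2 j :=
            (Finset.sum_subset (Finset.subset_univ _)
              (fun x _ hx => by rw [hzero x hx]; ring)).symm
          rw [e]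
          calc ∑ j ∈ Af', (H z' i j) ^ 2 * σ2 j
              ≤ ∑ j ∈ Af', (H z' i j) ^ 2 * σ2 i := by
                apply Finset.sum_le_sum
                intro j hj
                have hjne : j ≠ i := fun h => hiA' (h ▸ hj)
                have hzj : z j = 1 := by
                  have : z' j = 1 := by simpa [hAf'] using hj
                  rwa [hz', Function.update_of_ne hjne] at this
                have hσle : σ2 j ≤ σ2 i := himax j (by simp [hAf, hzj])
                exact mul_le_mul_of_nonneg_left hσle (sq_nonneg _)
            _ = (∑ j ∈ Af', (H z' i j) ^ 2) * σ2 i := by rw [Finset.sum_mul]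
            _ ≤ 1 * σ2 i := mul_le_mul_of_nonneg_right
                (sum_sq_le_one Af' _ (fun j _ => Hnn P hPnn H hH z' hz'cube i j) hrow1)
                (le_of_lt (hσ i))
            _ = σ2 i := one_mul _
        have Nash := hNash i 0 htmem htne
        rw [hvz, ← hz'] at Nash
        linarith
    -- Step 2: all interior; derive the common value condition
    have hzlt' : ∀ k, (0:ℝ) < 1 - z k := fun k => by linarith [hzlt k]
    set x : Fin n → ℝ := fun k => π k / (1 - z k) with hx
    have hxpos : ∀ k, 0 < x k := fun k => div_pos (hπpos k) (hzlt' k)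
    set S := ∑ k, x k with hS
    set V := ∑ k, σ2 k * x k ^ 2 with hV
    have hSpos : 0 < S := Finset.sum_pos (fun k _ => hxpos k) ne
    have hVpos : 0 < V :=
      Finset.sum_pos (fun k _ => mul_pos (hσ k) (pow_pos (hxpos k) 2)) ne
    have hxge : ∀ k, π k ≤ x k := by
      intro k
      have h1 : 1 - z k ≤ 1 := by linarith [(hz k).1]
      rw [hx]
      rw [le_div_iff₀ (hzlt' k)]
      nlinarith [hπpos k]
    have hfoc_ge : ∀ i, V ≤ σ2 i * x i * S := by
      intro i
      by_contra hlt
      push_neg at hlt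
      have hierase : (univ.erase i).Nonempty := by
        have : Nontrivial (Fin n) := Fin.nontrivial_iff_two_le.mpr hn
        obtain ⟨k, hk⟩ := exists_ne i
        exact ⟨k, Finset.mem_erase.2 ⟨hk, mem_univ k⟩⟩
      set Ai := ∑ j ∈ univ.erase i, x j with hAi
      set Bi := ∑ j ∈ univ.erase i, σ2 j * x j ^ 2 with hBi
      have hApos : 0 < Ai := Finset.sum_pos (fun j _ => hxpos j) hierase
      have hBpos : 0 < Bi :=
        Finset.sum_pos (fun j _ => mul_pos (hσ j) (pow_pos (hxpos j) 2)) hierase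
      have hSA : S = x i + Ai := by
        rw [hS, hAi]
        exact (Finset.add_sum_erase univ x (mem_univ i)).symm
      have hVB : V = σ2 i * x i ^ 2 + Bi := by
        rw [hV, hBi]
        exact (Finset.add_sum_erase univ (fun k => σ2 k * x k ^ 2) (mem_univ i)).symm
      have hAB : σ2 i * Ai * x i < Bi := by
        rw [hSA, hVB] at hlt
        nlinarith [hlt]
      have hσA : 0 < σ2 i * Ai := mul_pos (hσ i) hApos
      set y : ℝ := Bi / (σ2 i * Ai) with hy
      have hypos : 0 < y := div_pos hBpos hσA
      have hxy : x i < y := by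
        rw [hy, lt_div_iff₀ hσA]
        nlinarith [hAB]
      set t : ℝ := 1 - π i / y with ht
      have hyπ : π i ≤ y := le_trans (hxge i) (le_of_lt hxy)
      have htlt : t < 1 := by
        rw [ht]
        have : 0 < π i / y := div_pos (hπpos i) hypos
        linarith
      have htmem : t ∈ Set.Icc (0:ℝ) 1 := by
        constructor
        · rw [ht]
          have : π i / y ≤ 1 := (div_le_one hypos).2 hyπ
          linarith
        · exact le_of_lt htlt
      have hyt : π i / (1 - t) = y := by
        have h1t : 1 - t = π i / y := by rw [ht]; ring
        rw [h1t]
        exact div_div_cancel₀ (ne_of_gt (hπpos i))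
      have htne : t ≠ z i := by
        intro h
        have : x i = y := by
          simp only [hx]
          rw [← h, hyt]
        exact absurd this (ne_of_lt hxy)
      have hult : ∀ k, Function.update z i t k < 1 := by
        intro k
        by_cases hk : k = i
        · subst hk; rw [Function.update_self]; exact htlt
        · rw [Function.update_of_ne hk]; exact hzlt k
      have Nash := hNash i t htmem htne
      have hvz : ∑ j, (H z i j) ^ 2 * σ2 j = (σ2 i * x i ^ 2 + Bi) / (x i + Ai) ^ 2 := by
        rw [hvval z hz hzlt i]
      have hvz' : ∑ j, (H (Function.update z i t) i j) ^ 2 * σ2 j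
          = (σ2 i * y ^ 2 + Bi) / (y + Ai) ^ 2 := by
        rw [hvval _ (hcube i t htmem) hult i, Function.update_self,
          herase1, herase2, hyt]
      rw [hvz, hvz'] at Nash
      have hfoc : σ2 i * Ai * y = Bi := by
        rw [hy]
        have hσne : σ2 i ≠ 0 := ne_of_gt (hσ i)
        have hAne : Ai ≠ 0 := ne_of_gt hApos
        field_simp
      have := key_alg (σ2 i) Ai Bi y (x i) (hσ i) hApos hypos (hxpos i) hfoc
        (ne_of_gt hxy)
      linarith
    have heq : ∀ i, σ2 i * x i * S = V := by
      have hsum0 : ∑ i, x i * (σ2 i * x i * S - V) = 0 := by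
        have e : ∀ i, x i * (σ2 i * x i * S - V) = S * (σ2 i * x i ^ 2) - x i * V :=
          fun i => by ring
        rw [Finset.sum_congr rfl fun i _ => e i, Finset.sum_sub_distrib,
          ← Finset.mul_sum, ← Finset.sum_mul, ← hV, ← hS]
        ring
      intro i
      have hterm := (Finset.sum_eq_zero_iff_of_nonneg
        (fun k _ => mul_nonneg (le_of_lt (hxpos k)) (by linarith [hfoc_ge k]))).1
        hsum0 i (mem_univ i)
      rcases mul_eq_zero.1 hterm with h | h
      · exact absurd h (ne_of_gt (hxpos i))
      · linarith
    have hrep : ∀ k, z k = 1 - S / V * (π k * σ2 k) := by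
      intro k
      have hπx : π k = x k * (1 - z k) := by
        simp only [hx]
        rw [div_mul_cancel₀ _ (ne_of_gt (hzlt' k))]
      have key : S / V * (π k * σ2 k) = 1 - z k := by
        rw [div_mul_eq_mul_div, div_eq_iff (ne_of_gt hVpos), ← heq k]
        linear_combination (σ2 k * S) * hπx
      linarith [key]
    refine ⟨S / V, div_pos hSpos hVpos, ?_, hrep⟩
    obtain ⟨i0, _, hi0⟩ := Finset.exists_mem_eq_sup' ne (fun k => π k * σ2 k)
    have hμpos : 0 < π i0 * σ2 i0 := mul_pos (hπpos i0) (hσ i0)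
    have h0le := (hz i0).1
    rw [hrep i0] at h0le
    rw [show (univ.sup' ⟨⟨0, by omega⟩, Finset.mem_univ _⟩ fun i => π i * σ2 i)
        = π i0 * σ2 i0 from hi0]
    rw [le_div_iff₀ hμpos]
    linarith
  · rintro ⟨α, hα0, hαle, hrep⟩
    have hzlt : ∀ k, z k < 1 := by
      intro k
      rw [hrep k]
      nlinarith [mul_pos (hπpos k) (hσ k)]
    have hzlt' : ∀ k, (0:ℝ) < 1 - z k := fun k => by linarith [hzlt k]
    intro i t htmem htne
    set x : Fin n → ℝ := fun k => π k / (1 - z k) with hx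
    have hxpos : ∀ k, 0 < x k := fun k => div_pos (hπpos k) (hzlt' k)
    have h1z : ∀ k, 1 - z k = α * (π k * σ2 k) := fun k => by rw [hrep k]; ring
    have hxval : ∀ k, σ2 k * x k = 1 / α := by
      intro k
      have hπne : π k ≠ 0 := ne_of_gt (hπpos k)
      have hσne : σ2 k ≠ 0 := ne_of_gt (hσ k)
      have hαne : α ≠ 0 := ne_of_gt hα0
      have e : x k = π k / (α * (π k * σ2 k)) := by simp only [hx]; rw [h1z k]
      rw [e]
      field_simp
    set Ai := ∑ j ∈ univ.erase i, x j with hAi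
    set Bi := ∑ j ∈ univ.erase i, σ2 j * x j ^ 2 with hBi
    have hierase : (univ.erase i).Nonempty := by
      have : Nontrivial (Fin n) := Fin.nontrivial_iff_two_le.mpr hn
      obtain ⟨k, hk⟩ := exists_ne i
      exact ⟨k, Finset.mem_erase.2 ⟨hk, mem_univ k⟩⟩
    have hApos : 0 < Ai := Finset.sum_pos (fun j _ => hxpos j) hierase
    have hfoc : σ2 i * Ai * x i = Bi := by
      have e : Bi = ∑ j ∈ univ.erase i, (1 / α) * x j := by
        rw [hBi]
        refine Finset.sum_congr rfl fun j _ => ?_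
        rw [← hxval j]
        ring
      rw [e, ← Finset.mul_sum, ← hAi, mul_comm (σ2 i) Ai, mul_assoc, hxval i]
      ring
    have hvz : ∑ j, (H z i j) ^ 2 * σ2 j = (σ2 i * x i ^ 2 + Bi) / (x i + Ai) ^ 2 := by
      rw [hvval z hz hzlt i]
    rcases lt_or_eq_of_le htmem.2 with htlt | hteq
    · -- deviation to t < 1
      set y : ℝ := π i / (1 - t) with hy
      have hypos : 0 < y := div_pos (hπpos i) (by linarith)
      have hult : ∀ k, Function.update z i t k < 1 := by
        intro k
        by_cases hk : k = i
        · subst hk; rw [Function.update_self]; exact htlt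
        · rw [Function.update_of_ne hk]; exact hzlt k
      have hvz' : ∑ j, (H (Function.update z i t) i j) ^ 2 * σ2 j
          = (σ2 i * y ^ 2 + Bi) / (y + Ai) ^ 2 := by
        rw [hvval _ (hcube i t htmem) hult i, Function.update_self,
          herase1, herase2]
      have hyne : x i ≠ y := by
        intro h
        apply htne
        have e1 : π i / x i = 1 - z i := by
          simp only [hx]
          exact div_div_cancel₀ (ne_of_gt (hπpos i))
        have e2 : π i / y = 1 - t := by
          rw [hy]
          exact div_div_cancel₀ (ne_of_gt (hπpos i))
        rw [h] at e1
        linarith [e1.symm.trans e2]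
      rw [hvz, hvz']
      exact key_alg (σ2 i) Ai Bi (x i) y (hσ i) hApos (hxpos i) hypos hfoc hyne
    · -- deviation to t = 1
      have hupd1 : Function.update z i t i = 1 := by
        rw [Function.update_self, ← hteq]
      have hvz' : ∑ j, (H (Function.update z i t) i j) ^ 2 * σ2 j = σ2 i := by
        rw [Finset.sum_eq_single i]
        · rw [Habs P H hH _ (hcube i t htmem) i hupd1 i]
          simp
        · intro b _ hb
          rw [Habs P H hH _ (hcube i t htmem) i hupd1 b]
          simp [Ne.symm hb]
        · simp
      rw [hvz, hvz']
      exact glt1 (σ2 i) Ai Bi (x i) (hσ i) hApos (hxpos i) hfoc
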